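/- If a substring x of a string w has two distinct occurrences that both cross the same position k (i.e., each occurrence's interval contains k), then x is a substring of some run of w whose smallest period p satisfies p < |x|. -/

import Mathlib

open scoped Classical

/-- `p` is a period of `w[i..j]` (1-based positions): `w[t] = w[t+p]`
whenever `i ≤ t` and `t + p ≤ j`. -/
def PeriodOn {α : Type*} (w : List α) (i j p : ℕ) : Prop :=
  ∀ t ∈ Finset.Icc i j, t + p ≤ j → w[t - 1]? = w[t + p - 1]?

/-- `w[i..j]` is a run (maximal repetition) of `w` with smallest period `p`
(1-based positions): it is periodic with shortest period `p`, `2p ≤ j - i + 1`,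
and the period extends neither to position `i-1` nor to `j+1`. -/
def IsRun {α : Type*} (w : List α) (i j p : ℕ) : Prop :=
  1 ≤ i ∧ i ≤ j ∧ j ≤ w.length ∧ 0 < p ∧ 2 * p ≤ j - i + 1 ∧
  PeriodOn w i j p ∧
  (∀ q ∈ Finset.Ico 1 p, ¬ PeriodOn w i j q) ∧
  (i = 1 ∨ w[i - 2]? ≠ w[i + p - 2]?) ∧
  (j = w.length ∨ w[j]? ≠ w[j - p]?)

/-- `x` occurs in `w` at (1-based) position `s`. -/
def OccAt {α : Type*} (w x : List α) (s : ℕ) : Prop :=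
  1 ≤ s ∧ s + x.length - 1 ≤ w.length ∧ (w.drop (s - 1)).take x.length = x

lemma occ_get {α : Type*} {w x : List α} {s : ℕ} (h : OccAt w x s) :
    ∀ u, u < x.length → w[s - 1 + u]? = x[u]? := by
  intro u hu
  obtain ⟨h1, h2, h3⟩ := h
  conv_rhs => rw [← h3]
  rw [List.getElem?_take, if_pos hu, List.getElem?_drop]

lemma period_restrict {α : Type*} {w : List α} {i j p i2 j2 : ℕ}
    (h : PeriodOn w i j p) (hi : i ≤ i2) (hj : j2 ≤ j) : PeriodOn w i2 j2 p := by
  intro t ht htp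
  rw [Finset.mem_Icc] at ht
  exact h t (Finset.mem_Icc.mpr ⟨le_trans hi ht.1, le_trans ht.2 hj⟩) (le_trans htp hj)

lemma key {α : Type*} (w x : List α) :
    ∀ p, 0 < p → p < x.length →
    ∀ i j, 1 ≤ i → j ≤ w.length → 2 * p ≤ j - i + 1 → PeriodOn w i j p →
    (∃ s, OccAt w x s ∧ i ≤ s ∧ s + x.length - 1 ≤ j) →
    ∃ i' j' p', IsRun w i' j' p' ∧ p' < x.length ∧
      ∃ s, OccAt w x s ∧ i' ≤ s ∧ s + x.length - 1 ≤ j' := by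
  intro p
  induction p using Nat.strong_induction_on with
  | _ p IH =>
    intro hp hpx i j hi hj hlen hper hocc
    have hij : i + 1 ≤ j := by omega
    -- extend left
    set P1 : ℕ → Prop := fun m => 1 ≤ i - m ∧ m ≤ i - 1 ∧ PeriodOn w (i - m) j p with hP1
    have hP10 : P1 0 := ⟨by omega, by omega, by simpa using hper⟩
    set m1 := Nat.findGreatest P1 (i - 1) with hm1
    have hm1spec : P1 m1 := Nat.findGreatest_spec (Nat.zero_le _) hP10
    set i' := i - m1 with hi'
    have hi'1 : 1 ≤ i' := hm1spec.1
    have hi'le : i' ≤ i := by omega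
    have hperL : PeriodOn w i' j p := hm1spec.2.2
    have hmax1 : i' = 1 ∨ ¬ PeriodOn w (i' - 1) j p := by
      rcases eq_or_lt_of_le hm1spec.2.1 with h1 | h1
      · left; omega
      · right
        intro hcon
        have := Nat.findGreatest_is_greatest (lt_add_one m1) (by omega : m1 + 1 ≤ i - 1)
        apply this
        refine ⟨by omega, by omega, ?_⟩
        have : i - (m1 + 1) = i' - 1 := by omega
        rw [this]; exact hcon
    -- extend right
    set P2 : ℕ → Prop := fun m => j + m ≤ w.length ∧ PeriodOn w i' (j + m) p with hP2
    have hP20 : P2 0 := ⟨by omega, by simpa using hperL⟩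
    set m2 := Nat.findGreatest P2 (w.length - j) with hm2
    have hm2spec : P2 m2 := Nat.findGreatest_spec (Nat.zero_le _) hP20
    set j' := j + m2 with hj'
    have hj'le : j' ≤ w.length := hm2spec.1
    have hjle : j ≤ j' := by omega
    have hperR : PeriodOn w i' j' p := hm2spec.2
    have hmax2 : j' = w.length ∨ ¬ PeriodOn w i' (j' + 1) p := by
      rcases eq_or_lt_of_le hj'le with h1 | h1
      · left; exact h1
      · right
        intro hcon
        have hb : m2 + 1 ≤ w.length - j := by omega
        exact Nat.findGreatest_is_greatest (lt_add_one m2) hb ⟨by omega, hcon⟩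
    -- smallest period
    have hex : ∃ q, 0 < q ∧ PeriodOn w i' j' q := ⟨p, hp, hperR⟩
    set q := Nat.find hex with hqdef
    obtain ⟨hq0, hqper⟩ := Nat.find_spec hex
    have hqle : q ≤ p := Nat.find_min' hex ⟨hp, hperR⟩
    have hlen' : 2 * p ≤ j' - i' + 1 := by omega
    rcases eq_or_lt_of_le hqle with hqp | hqp
    · -- q = p : this is a run
      refine ⟨i', j', p, ⟨hi'1, by omega, hj'le, hp, hlen', hperR, ?_, ?_, ?_⟩, hpx, ?_⟩
      · intro r hr
        rw [Finset.mem_Ico] at hr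
        intro hrper
        have := Nat.find_min hex (by omega : r < q)
        exact this ⟨by omega, hrper⟩
      · -- left boundary
        rcases hmax1 with h1 | h1
        · left; exact h1
        · right
          intro heq
          apply h1
          intro t ht htp
          rw [Finset.mem_Icc] at ht
          rcases eq_or_lt_of_le ht.1 with h2 | h2
          · have e1 : t - 1 = i' - 2 := by omega
            have e2 : t + p - 1 = i' + p - 2 := by omega
            rw [e1, e2]; exact heq
          · exact hperL t (Finset.mem_Icc.mpr ⟨by omega, ht.2⟩) htp
      · -- right boundary
        rcases hmax2 with h1 | h1
        · left; exact h1
        · right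
          intro heq
          apply h1
          intro t ht htp
          rw [Finset.mem_Icc] at ht
          rcases eq_or_lt_of_le htp with h2 | h2
          · have e1 : t - 1 = j' - p := by omega
            have e2 : t + p - 1 = j' := by omega
            rw [e1, e2]; exact heq.symm
          · exact hperR t (Finset.mem_Icc.mpr ⟨ht.1, by omega⟩) (by omega)
      · obtain ⟨s, hs, hs1, hs2⟩ := hocc
        exact ⟨s, hs, by omega, by omega⟩
    · -- q < p : recurse
      obtain ⟨s, hs, hs1, hs2⟩ := hocc
      exact IH q hqp hq0 (by omega) i' j' hi'1 hj'le (by omega) hqper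
        ⟨s, hs, by omega, by omega⟩

lemma helper {α : Type*} (w x : List α) (k a b : ℕ)
    (hx : x ≠ []) (hab : a < b)
    (ha : OccAt w x a ∧ a ≤ k ∧ k ≤ a + x.length - 1)
    (hb : OccAt w x b ∧ b ≤ k ∧ k ≤ b + x.length - 1) :
    ∃ i j p, IsRun w i j p ∧ p < x.length ∧
      ∃ s, OccAt w x s ∧ i ≤ s ∧ s + x.length - 1 ≤ j := by
  obtain ⟨hA, hak, hka⟩ := ha
  obtain ⟨hB, hbk, hkb⟩ := hb
  have hx1 : 1 ≤ x.length := by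
    rcases x with _ | ⟨c, x⟩
    · exact absurd rfl hx
    · simp
  have ha1 : 1 ≤ a := hA.1
  have hb1 : 1 ≤ b := hB.1
  set p0 := b - a with hp0
  have hp0pos : 0 < p0 := by omega
  have hp0x : p0 < x.length := by omega
  have hper : PeriodOn w a (b + x.length - 1) p0 := by
    intro t ht htp
    rw [Finset.mem_Icc] at ht
    set u := t - a with hu
    have hulen : u < x.length := by omega
    have e1 : t - 1 = a - 1 + u := by omega
    have e2 : t + p0 - 1 = b - 1 + u := by omega
    rw [e1, e2, occ_get hA u hulen, occ_get hB u hulen]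
  exact key w x p0 hp0pos hp0x a (b + x.length - 1) ha1 hB.2.1 (by omega) hper
    ⟨a, hA, le_refl a, by omega⟩

/-- If a substring `x` of `w` has two distinct occurrences both crossing the same
position `k`, then `x` is a substring of some run of `w` whose smallest period
`p` satisfies `p < |x|`. -/
theorem crossing_pair_implies_run {α : Type*} (w x : List α) (k a b : ℕ)
    (hx : x ≠ []) (hab : a ≠ b)
    (ha : OccAt w x a ∧ a ≤ k ∧ k ≤ a + x.length - 1)
    (hb : OccAt w x b ∧ b ≤ k ∧ k ≤ b + x.length - 1) :
    ∃ i j p, IsRun w i j p ∧ p < x.length ∧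
      ∃ s, OccAt w x s ∧ i ≤ s ∧ s + x.length - 1 ≤ j := by
  rcases lt_or_gt_of_ne hab with h | h
  · exact helper w x k a b hx h ha hb
  · exact helper w x k b a hx h hb ha
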